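/- Euler decomposition of the qutrit Hadamard: with ω = e^{2πi/3}, G = diag(1, ω², ω²) (the green 4π/3-rotation) and R = H·G·Hᴴ (the red 4π/3-rotation), the qutrit Hadamard matrix H = (1/√3)·[[1,1,1],[1,ω,ω²],[1,ω²,ω]] satisfies H = c · G·R·G for some nonzero complex scalar c. -/

import Mathlib

noncomputable def ω : ℂ := Complex.exp (2 * Real.pi * Complex.I / 3)

noncomputable def H : Matrix (Fin 3) (Fin 3) ℂ :=
  Matrix.of fun j k => (1 / Real.sqrt 3 : ℂ) * ω ^ (j.val * k.val)

noncomputable def G : Matrix (Fin 3) (Fin 3) ℂ :=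
  Matrix.diagonal ![1, ω ^ 2, ω ^ 2]

noncomputable def R : Matrix (Fin 3) (Fin 3) ℂ :=
  H * G * H.conjTranspose

/-!
Write `H = 3^{-1/2} F` with `F j k = ω ^ (j * k)` the unnormalised Fourier matrix. Since
`conj ω = ω²`, also `Hᴴ = 3^{-1/2} F(ω²)`, so `G R G = (1/3) G F G F(ω²) G` is a matrix of
polynomials in `ω`. For any `w` in a commutative ring with `1 + w + w² = 0` one checks
`(w - w²) G F G F(w²) G = 3 F` entrywise, and `ω - ω² = i√3`; hence `H = i G R G`.
-/

namespace Qutrit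

variable {A : Type*} [CommRing A]

def fourierMatrix (w : A) : Matrix (Fin 3) (Fin 3) A := Matrix.of fun j k => w ^ (j.val * k.val)

def phaseMatrix (w : A) : Matrix (Fin 3) (Fin 3) A := Matrix.diagonal ![1, w ^ 2, w ^ 2]

theorem fourierMatrix_eq (w : A) : fourierMatrix w = !![1, 1, 1; 1, w, w ^ 2; 1, w ^ 2, w ^ 4] := by
  ext j k
  fin_cases j <;> fin_cases k <;> simp [fourierMatrix]

theorem phaseMatrix_eq (w : A) : phaseMatrix w = !![1, 0, 0; 0, w ^ 2, 0; 0, 0, w ^ 2] := by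
  ext j k
  fin_cases j <;> fin_cases k <;> rfl

theorem conjTranspose_fourierMatrix [StarRing A] (w : A) :
    (fourierMatrix w).conjTranspose = fourierMatrix (star w) := by
  ext j k
  simp [fourierMatrix, star_pow, mul_comm]

theorem smul_phaseMatrix_mul_fourierMatrix_mul_phaseMatrix {w : A} (hw : 1 + w + w ^ 2 = 0) :
    (w - w ^ 2) • (phaseMatrix w * fourierMatrix w * phaseMatrix w * fourierMatrix (w ^ 2) *
      phaseMatrix w) = (3 : A) • fourierMatrix w := by
  rw [phaseMatrix_eq, fourierMatrix_eq, fourierMatrix_eq]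
  simp only [Matrix.mul_fin_three, Matrix.smul_of, Matrix.smul_cons, Matrix.smul_empty,
    smul_eq_mul, EmbeddingLike.apply_eq_iff_eq, Matrix.vecCons_inj, and_true]
  refine ⟨⟨?_, ?_, ?_⟩, ⟨?_, ?_, ?_⟩, ⟨?_, ?_, ?_⟩⟩ <;> grind

end Qutrit

open Qutrit

theorem isPrimitiveRoot_ω : IsPrimitiveRoot ω 3 := by
  simpa [ω] using Complex.isPrimitiveRoot_exp 3 three_ne_zero

theorem one_add_ω_add_ω_sq : 1 + ω + ω ^ 2 = 0 := by
  simpa [Finset.sum_range_succ, add_assoc] using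
    isPrimitiveRoot_ω.geom_sum_eq_zero (by norm_num)

theorem star_ω : star ω = ω ^ 2 := by
  have hω : ω ≠ 0 := isPrimitiveRoot_ω.ne_zero three_ne_zero
  have h : ω * star ω = ω * ω ^ 2 := by
    rw [Complex.star_def, Complex.mul_conj', isPrimitiveRoot_ω.norm'_eq_one three_ne_zero]
    push_cast
    linear_combination -isPrimitiveRoot_ω.pow_eq_one
  exact mul_left_cancel₀ hω h

theorem ω_im : ω.im = √3 / 2 := by
  rw [ω, show 2 * Real.pi * Complex.I / 3 = ((2 * Real.pi / 3 : ℝ) : ℂ) * Complex.I by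
    push_cast; ring, Complex.exp_ofReal_mul_I_im,
    show 2 * Real.pi / 3 = Real.pi - Real.pi / 3 by ring, Real.sin_pi_sub, Real.sin_pi_div_three]

theorem I_mul_sqrt_three : Complex.I * (√3 : ℝ) = ω - ω ^ 2 := by
  rw [← star_ω, Complex.star_def, Complex.sub_conj, ω_im]
  push_cast
  ring

theorem H_eq_smul_fourierMatrix : H = ((√3 : ℝ) : ℂ)⁻¹ • fourierMatrix ω := by
  ext j k
  simp [H, fourierMatrix]

theorem conjTranspose_H :
    H.conjTranspose = ((√3 : ℝ) : ℂ)⁻¹ • fourierMatrix (ω ^ 2) := by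
  rw [H_eq_smul_fourierMatrix, Matrix.conjTranspose_smul, conjTranspose_fourierMatrix, star_ω,
    star_inv₀, Complex.star_def, Complex.conj_ofReal]

theorem G_mul_R_mul_G :
    G * R * G = (3 : ℂ)⁻¹ • (phaseMatrix ω * fourierMatrix ω * phaseMatrix ω *
      fourierMatrix (ω ^ 2) * phaseMatrix ω) := by
  have h3 : ((√3 : ℝ) : ℂ)⁻¹ * ((√3 : ℝ) : ℂ)⁻¹ = 3⁻¹ := by
    rw [← mul_inv, ← Complex.ofReal_mul, Real.mul_self_sqrt zero_le_three]; norm_num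
  rw [R, conjTranspose_H, H_eq_smul_fourierMatrix, G, ← phaseMatrix]
  simp only [Matrix.smul_mul, Matrix.mul_smul, smul_smul, Matrix.mul_assoc, h3]

theorem euler_decomposition : ∃ c : ℂ, c ≠ 0 ∧ H = c • (G * R * G) := by
  refine ⟨Complex.I, Complex.I_ne_zero, ?_⟩
  have hprod := smul_phaseMatrix_mul_fourierMatrix_mul_phaseMatrix one_add_ω_add_ω_sq
  rw [← I_mul_sqrt_three] at hprod
  calc H = ((√3 : ℝ) : ℂ)⁻¹ • fourierMatrix ω := H_eq_smul_fourierMatrix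
    _ = ((√3 : ℝ) : ℂ)⁻¹ • (3 : ℂ)⁻¹ • (Complex.I * (√3 : ℝ)) •
        (phaseMatrix ω * fourierMatrix ω * phaseMatrix ω * fourierMatrix (ω ^ 2) *
          phaseMatrix ω) := by rw [hprod, inv_smul_smul₀ three_ne_zero]
    _ = Complex.I • (G * R * G) := by
      rw [G_mul_R_mul_G, smul_smul, smul_smul, smul_smul]
      congr 1
      field_simp
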